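/- Let ℓ ≥ 1, let γ > 0, let θ be a Borel probability measure on the unit sphere S^{ℓ−1} ⊆ ℝ^ℓ, let μ = γ·(λ ⊗ θ) where λ is Lebesgue measure on ℝ, and define L(a,b) = min{ μ(Ĝ_i(a,b)) : i = 1,…,2ℓ } for 0 < a < b. Then for every r > 1: L(r·a, r·b) = r·L(a,b) and L(a, r·b) ≥ r·L(a,b). -/

import Mathlib

/-!
Scaling the cube by `r` scales each facet by `r`, and a hyperplane `H(α,u)` separates `r • A`
from `r • B` exactly when `H(α/r,u)` separates `A` from `B`. Hence `Ĝ_i(ra,rb)` is the preimage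
of `Ĝ_i(a,b)` under `(α,u) ↦ (α/r,u)`, whose `λ ⊗ θ`-measure is `r` times larger; taking minima
gives `L(ra,rb) = r L(a,b)`. For the inequality, a hyperplane with `α ≥ 0` separating
`f_i(ra)` from `f_i(rb)` also separates `f_i(a)` from `f_i(rb)`, so `Ĝ_i(ra,rb) ⊆ Ĝ_i(a,rb)`:
for `α ≥ 0` the half-space `H⁻(α,u)` is star-shaped about the origin, and `f_i(ra) ⊆ H⁺(α,u)`
together with `f_i(rb) ⊆ H⁻(α,u)` forces `⟪x,u⟫ = 0 = α` on `f_i(a)`.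
-/

open MeasureTheory

noncomputable section

/-- The hyperplane `H(α,u) = {x : ⟨x,u⟩ = α}` in `ℝ^ℓ`. -/
def Hplane (ℓ : ℕ) (α : ℝ) (u : EuclideanSpace ℝ (Fin ℓ)) : Set (EuclideanSpace ℝ (Fin ℓ)) :=
  {x | (inner ℝ x u : ℝ) = α}

/-- The closed half-space `H⁻(α,u) = {x : ⟨x,u⟩ ≤ α}`. -/
def Hminus (ℓ : ℕ) (α : ℝ) (u : EuclideanSpace ℝ (Fin ℓ)) : Set (EuclideanSpace ℝ (Fin ℓ)) :=
  {x | (inner ℝ x u : ℝ) ≤ α}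

/-- The closed half-space `H⁺(α,u) = {x : ⟨x,u⟩ ≥ α}`. -/
def Hplus (ℓ : ℕ) (α : ℝ) (u : EuclideanSpace ℝ (Fin ℓ)) : Set (EuclideanSpace ℝ (Fin ℓ)) :=
  {x | α ≤ (inner ℝ x u : ℝ)}

/-- The hyperplane `H(α,u)` separates the sets `A` and `B`. -/
def Separates {ℓ : ℕ} (A B : Set (EuclideanSpace ℝ (Fin ℓ))) (α : ℝ)
    (u : EuclideanSpace ℝ (Fin ℓ)) : Prop :=
  (A ⊆ Hplus ℓ α u ∧ B ⊆ Hminus ℓ α u) ∨ (A ⊆ Hminus ℓ α u ∧ B ⊆ Hplus ℓ α u)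

/-- The facet `f_i(c) = {x : x_i = c, |x_j| ≤ c for j ≠ i}` of the cube `[−c,c]^ℓ`. -/
def facetBase (ℓ : ℕ) (i : Fin ℓ) (c : ℝ) : Set (EuclideanSpace ℝ (Fin ℓ)) :=
  {x | x i = c ∧ ∀ j, j ≠ i → |x j| ≤ c}

/-- The `2ℓ` facets of the cube `[−c,c]^ℓ`, indexed by `Fin ℓ ⊕ Fin ℓ`:
`Sum.inl i` is `f_i(c)` and `Sum.inr i` is `f_{i+ℓ}(c) = −f_i(c)`. -/
def facet (ℓ : ℕ) (i : Fin ℓ ⊕ Fin ℓ) (c : ℝ) : Set (EuclideanSpace ℝ (Fin ℓ)) :=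
  match i with
  | Sum.inl i => facetBase ℓ i c
  | Sum.inr i => (fun x => -x) '' facetBase ℓ i c

/-- The unit sphere `S^{ℓ−1}` in `ℝ^ℓ`. -/
abbrev unitSphere (ℓ : ℕ) : Set (EuclideanSpace ℝ (Fin ℓ)) :=
  Metric.sphere (0 : EuclideanSpace ℝ (Fin ℓ)) 1

/-- `Ĝ_i(a,b)`: the set of parameters `(α,u) ∈ [0,∞) × S^{ℓ−1}` such that `H(α,u)`
separates `f_i(a)` and `f_i(b)`. -/
def Ghat (ℓ : ℕ) (i : Fin ℓ ⊕ Fin ℓ) (a b : ℝ) : Set (ℝ × unitSphere ℓ) :=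
  {p | 0 ≤ p.1 ∧ Separates (facet ℓ i a) (facet ℓ i b) p.1 (p.2 : EuclideanSpace ℝ (Fin ℓ))}

/-- The hyperplane measure `μ = γ·(λ ⊗ θ)` on `ℝ × S^{ℓ−1}`. -/
def hypMeasure (ℓ : ℕ) (γ : ℝ) (θ : Measure (unitSphere ℓ)) : Measure (ℝ × unitSphere ℓ) :=
  ENNReal.ofReal γ • ((volume : Measure ℝ).prod θ)


/-- `L(a,b) = min { μ(Ĝ_i(a,b)) : i = 1,…,2ℓ }`. -/
def Lmin (ℓ : ℕ) (γ : ℝ) (θ : Measure (unitSphere ℓ)) (a b : ℝ) : ENNReal :=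
  ⨅ i : Fin ℓ ⊕ Fin ℓ, hypMeasure ℓ γ θ (Ghat ℓ i a b)

open Set
open scoped Pointwise

theorem MeasureTheory.Measure.volume_prod_preimage_mul_left {β : Type*} [MeasurableSpace β]
    (ν : Measure β) [SFinite ν] {a : ℝ} (ha : a ≠ 0) (s : Set (ℝ × β)) :
    (volume.prod ν) (Prod.map (a * ·) id ⁻¹' s) = ENNReal.ofReal |a⁻¹| * (volume.prod ν) s := by
  let e : ℝ × β ≃ᵐ ℝ × β :=
    (Homeomorph.mulLeft₀ a ha).toMeasurableEquiv.prodCongr (MeasurableEquiv.refl β)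
  change (volume.prod ν) (e ⁻¹' s) = _
  rw [← e.map_apply, show (e : ℝ × β → ℝ × β) = Prod.map (a * ·) id from rfl,
    ← Measure.map_prod_map _ _ (measurable_const_mul a) measurable_id, Measure.map_id,
    Real.map_volume_mul_left ha, Measure.prod_smul_left, Measure.smul_apply, smul_eq_mul]

section Geometry

variable {ℓ : ℕ}

theorem facetBase_mul (i : Fin ℓ) {r : ℝ} (hr : 0 < r) (c : ℝ) :
    facetBase ℓ i (r * c) = r • facetBase ℓ i c := by
  rw [← inv_inv r, ← Set.preimage_smul₀ (inv_ne_zero hr.ne'), inv_inv]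
  ext x
  simp only [facetBase, mem_ofPred_eq, mem_preimage, PiLp.smul_apply, smul_eq_mul, abs_mul,
    abs_inv, abs_of_pos hr, inv_mul_eq_iff_eq_mul₀ hr.ne', inv_mul_le_iff₀ hr]

theorem facet_mul (i : Fin ℓ ⊕ Fin ℓ) {r : ℝ} (hr : 0 < r) (c : ℝ) :
    facet ℓ i (r * c) = r • facet ℓ i c := by
  cases i with
  | inl i => exact facetBase_mul i hr c
  | inr i => simp only [facet, image_neg_eq_neg, facetBase_mul i hr, smul_set_neg]

theorem smul_subset_Hplus_iff {A : Set (EuclideanSpace ℝ (Fin ℓ))} {r : ℝ} (hr : 0 < r)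
    (α : ℝ) (u : EuclideanSpace ℝ (Fin ℓ)) :
    r • A ⊆ Hplus ℓ (r * α) u ↔ A ⊆ Hplus ℓ α u := by
  rw [smul_set_subset_iff]
  simp only [Hplus, subset_ofPred, mem_ofPred_eq, real_inner_smul_left, mul_le_mul_iff_right₀ hr]

theorem smul_subset_Hminus_iff {A : Set (EuclideanSpace ℝ (Fin ℓ))} {r : ℝ} (hr : 0 < r)
    (α : ℝ) (u : EuclideanSpace ℝ (Fin ℓ)) :
    r • A ⊆ Hminus ℓ (r * α) u ↔ A ⊆ Hminus ℓ α u := by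
  rw [smul_set_subset_iff]
  simp only [Hminus, subset_ofPred, mem_ofPred_eq, real_inner_smul_left, mul_le_mul_iff_right₀ hr]

theorem separates_smul_iff {A B : Set (EuclideanSpace ℝ (Fin ℓ))} {r : ℝ} (hr : 0 < r)
    (α : ℝ) (u : EuclideanSpace ℝ (Fin ℓ)) :
    Separates (r • A) (r • B) (r * α) u ↔ Separates A B α u := by
  simp only [Separates, smul_subset_Hplus_iff hr, smul_subset_Hminus_iff hr]

theorem subset_Hminus_of_smul_subset {A : Set (EuclideanSpace ℝ (Fin ℓ))} {s α : ℝ}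
    {u : EuclideanSpace ℝ (Fin ℓ)} (hs : 1 ≤ s) (hα : 0 ≤ α) (h : s • A ⊆ Hminus ℓ α u) :
    A ⊆ Hminus ℓ α u := by
  intro x hx
  have hsx : s * inner ℝ x u ≤ α := by
    simpa [Hminus, real_inner_smul_left] using h (smul_mem_smul_set hx)
  change inner ℝ x u ≤ α
  nlinarith

theorem subset_Hplus_of_smul_subset {A : Set (EuclideanSpace ℝ (Fin ℓ))} {s t α : ℝ}
    {u : EuclideanSpace ℝ (Fin ℓ)} (hs : 0 < s) (hst : s < t) (hα : 0 ≤ α)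
    (hA : s • A ⊆ Hplus ℓ α u) (hB : t • A ⊆ Hminus ℓ α u) : A ⊆ Hplus ℓ α u := by
  intro x hx
  have hsx : α ≤ s * inner ℝ x u := by
    simpa [Hplus, real_inner_smul_left] using hA (smul_mem_smul_set hx)
  have htx : t * inner ℝ x u ≤ α := by
    simpa [Hminus, real_inner_smul_left] using hB (smul_mem_smul_set hx)
  change α ≤ inner ℝ x u
  have hle : inner ℝ x u ≤ 0 := by nlinarith
  have hge : 0 ≤ inner ℝ x u := by nlinarith
  rw [le_antisymm hle hge, mul_zero] at hsx
  rwa [le_antisymm hle hge]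

theorem Separates.of_smul_left {A : Set (EuclideanSpace ℝ (Fin ℓ))} {s t α : ℝ}
    {u : EuclideanSpace ℝ (Fin ℓ)} (hs : 1 ≤ s) (hst : s < t) (hα : 0 ≤ α)
    (h : Separates (s • A) (t • A) α u) : Separates A (t • A) α u := by
  rcases h with ⟨hA, hB⟩ | ⟨hA, hB⟩
  · exact Or.inl ⟨subset_Hplus_of_smul_subset (by linarith) hst hα hA hB, hB⟩
  · exact Or.inr ⟨subset_Hminus_of_smul_subset hs hα hA, hB⟩

theorem Ghat_mul_mul (i : Fin ℓ ⊕ Fin ℓ) {r : ℝ} (hr : 0 < r) (a b : ℝ) :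
    Ghat ℓ i (r * a) (r * b) = Prod.map (r⁻¹ * ·) id ⁻¹' Ghat ℓ i a b := by
  ext ⟨α, u⟩
  have hα : α = r * (r⁻¹ * α) := (mul_inv_cancel_left₀ hr.ne' α).symm
  simp only [Ghat, mem_ofPred_eq, mem_preimage, Prod.map_apply, id_eq, facet_mul i hr]
  rw [hα, separates_smul_iff hr, ← hα, mul_nonneg_iff_of_pos_left (inv_pos.mpr hr)]

theorem Ghat_mul_mul_subset (i : Fin ℓ ⊕ Fin ℓ) {a b r : ℝ} (ha : 0 < a) (hab : a < b)
    (hr : 1 ≤ r) : Ghat ℓ i (r * a) (r * b) ⊆ Ghat ℓ i a (r * b) := by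
  rintro ⟨α, u⟩ ⟨hα, hsep⟩
  have hrb : r * b = (r * b / a) * a := (div_mul_cancel₀ _ ha.ne').symm
  have hlt : r < r * b / a := by rw [lt_div_iff₀ ha]; nlinarith
  have hr₀ : 0 < r := zero_lt_one.trans_le hr
  refine ⟨hα, ?_⟩
  rw [hrb, facet_mul i (hr₀.trans hlt) a] at hsep ⊢
  rw [facet_mul i hr₀ a] at hsep
  exact hsep.of_smul_left hr hlt hα

end Geometry

theorem hypMeasure_Ghat_mul_mul (ℓ : ℕ) (γ : ℝ) (θ : Measure (unitSphere ℓ)) [SFinite θ]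
    (i : Fin ℓ ⊕ Fin ℓ) {r : ℝ} (hr : 0 < r) (a b : ℝ) :
    hypMeasure ℓ γ θ (Ghat ℓ i (r * a) (r * b)) =
      ENNReal.ofReal r * hypMeasure ℓ γ θ (Ghat ℓ i a b) := by
  rw [Ghat_mul_mul i hr, hypMeasure, Measure.smul_apply, Measure.smul_apply, smul_eq_mul,
    smul_eq_mul, Measure.volume_prod_preimage_mul_left θ (inv_ne_zero hr.ne'), inv_inv,
    abs_of_pos hr, mul_left_comm]

theorem Lmin_mul_mul (ℓ : ℕ) (γ : ℝ) (θ : Measure (unitSphere ℓ)) [SFinite θ] {r : ℝ}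
    (hr : 0 < r) (a b : ℝ) :
    Lmin ℓ γ θ (r * a) (r * b) = ENNReal.ofReal r * Lmin ℓ γ θ a b := by
  rw [Lmin, Lmin, ENNReal.mul_iInf_of_ne (by simpa using hr) ENNReal.ofReal_ne_top]
  exact iInf_congr fun i => hypMeasure_Ghat_mul_mul ℓ γ θ i hr a b

theorem stmt15_general (ℓ : ℕ) (γ : ℝ)
    (θ : Measure (unitSphere ℓ)) [IsProbabilityMeasure θ]
    (a b r : ℝ) (ha : 0 < a) (hab : a < b) (hr : 1 < r) :
    Lmin ℓ γ θ (r * a) (r * b) = ENNReal.ofReal r * Lmin ℓ γ θ a b ∧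
    ENNReal.ofReal r * Lmin ℓ γ θ a b ≤ Lmin ℓ γ θ a (r * b) := by
  have hscale := Lmin_mul_mul ℓ γ θ (zero_lt_one.trans hr) a b
  refine ⟨hscale, hscale ▸ iInf_mono fun i => ?_⟩
  exact measure_mono (Ghat_mul_mul_subset i ha hab hr.le)

/-- For `r > 1`: `L(r·a, r·b) = r·L(a,b)` and `L(a, r·b) ≥ r·L(a,b)`. -/
theorem stmt15 (ℓ : ℕ) (hℓ : 1 ≤ ℓ) (γ : ℝ) (hγ : 0 < γ)
    (θ : Measure (unitSphere ℓ)) [IsProbabilityMeasure θ]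
    (a b r : ℝ) (ha : 0 < a) (hab : a < b) (hr : 1 < r) :
    Lmin ℓ γ θ (r * a) (r * b) = ENNReal.ofReal r * Lmin ℓ γ θ a b ∧
    ENNReal.ofReal r * Lmin ℓ γ θ a b ≤ Lmin ℓ γ θ a (r * b) :=
  stmt15_general ℓ γ θ a b r ha hab hr

end
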